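/- arXiv:1907.02286 — 6 statements merged into one kernel-verified Lean document; each statement's English description precedes it below -/
import Mathlib

section
/- Let Ω ⊂ ℝⁿ be a bounded open set, f : Ω → ℝ bounded, and λ > 0. Then for every x ∈ closure(Ω): M^λ_Ω(M_{λ,Ω}(f⁻_Ω̄))(x) = M^λ(M_λ(f⁻_ℝⁿ))(x) and M_{λ,Ω}(M^λ_Ω(f⁺_Ω̄))(x) = M_λ(M^λ(f⁺_ℝⁿ))(x). Consequently, C^l_{λ,Ω}(f⁻_Ω̄)(x) = C^l_λ(f⁻_ℝⁿ)(x) and C^u_{λ,Ω}(f⁺_Ω̄)(x) = C^u_λ(f⁺_ℝⁿ)(x) for all x ∈ closure(Ω). -/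
noncomputable section
attribute [local instance] Classical.propDecidable

/-- Global lower Moreau envelope `M_λ(g)(x) = inf_{y∈ℝⁿ} {g(y) + λ|y−x|²}`. -/
def moreauLower {n : ℕ} (lam : ℝ) (g : EuclideanSpace ℝ (Fin n) → ℝ)
    (x : EuclideanSpace ℝ (Fin n)) : ℝ :=
  ⨅ y : EuclideanSpace ℝ (Fin n), (g y + lam * ‖y - x‖ ^ 2)

/-- Global upper Moreau envelope `M^λ(g)(x) = sup_{y∈ℝⁿ} {g(y) − λ|y−x|²}`. -/
def moreauUpper {n : ℕ} (lam : ℝ) (g : EuclideanSpace ℝ (Fin n) → ℝ)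
    (x : EuclideanSpace ℝ (Fin n)) : ℝ :=
  ⨆ y : EuclideanSpace ℝ (Fin n), (g y - lam * ‖y - x‖ ^ 2)

/-- Local lower Moreau envelope `M_{λ,Ω}(g)(x) = inf_{y∈closure Ω} {g(y) + λ|y−x|²}`. -/
def moreauLowerLoc {n : ℕ} (lam : ℝ) (Ω : Set (EuclideanSpace ℝ (Fin n)))
    (g : EuclideanSpace ℝ (Fin n) → ℝ) (x : EuclideanSpace ℝ (Fin n)) : ℝ :=
  sInf ((fun y => g y + lam * ‖y - x‖ ^ 2) '' closure Ω)

/-- Local upper Moreau envelope `M^λ_Ω(g)(x) = sup_{y∈closure Ω} {g(y) − λ|y−x|²}`. -/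
def moreauUpperLoc {n : ℕ} (lam : ℝ) (Ω : Set (EuclideanSpace ℝ (Fin n)))
    (g : EuclideanSpace ℝ (Fin n) → ℝ) (x : EuclideanSpace ℝ (Fin n)) : ℝ :=
  sSup ((fun y => g y - lam * ‖y - x‖ ^ 2) '' closure Ω)

/-- The extension of `f` equal to `f` on `Ω` and to `inf_Ω f` off `Ω`
(this realizes both `f⁻_Ω̄` on `closure Ω` and `f⁻_ℝⁿ` on `ℝⁿ`). -/
def extMinus {n : ℕ} (Ω : Set (EuclideanSpace ℝ (Fin n)))
    (f : EuclideanSpace ℝ (Fin n) → ℝ) (x : EuclideanSpace ℝ (Fin n)) : ℝ :=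
  if x ∈ Ω then f x else sInf (f '' Ω)

/-- The extension of `f` equal to `f` on `Ω` and to `sup_Ω f` off `Ω`
(this realizes both `f⁺_Ω̄` on `closure Ω` and `f⁺_ℝⁿ` on `ℝⁿ`). -/
def extPlus {n : ℕ} (Ω : Set (EuclideanSpace ℝ (Fin n)))
    (f : EuclideanSpace ℝ (Fin n) → ℝ) (x : EuclideanSpace ℝ (Fin n)) : ℝ :=
  if x ∈ Ω then f x else sSup (f '' Ω)

/-- Local lower compensated convex transform `C^l_{λ,Ω}(g) = M^λ_Ω(M_{λ,Ω}(g))`. -/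
def lowerCCLoc {n : ℕ} (lam : ℝ) (Ω : Set (EuclideanSpace ℝ (Fin n)))
    (g : EuclideanSpace ℝ (Fin n) → ℝ) (x : EuclideanSpace ℝ (Fin n)) : ℝ :=
  moreauUpperLoc lam Ω (moreauLowerLoc lam Ω g) x

/-- Local upper compensated convex transform `C^u_{λ,Ω}(g) = M_{λ,Ω}(M^λ_Ω(g))`. -/
def upperCCLoc {n : ℕ} (lam : ℝ) (Ω : Set (EuclideanSpace ℝ (Fin n)))
    (g : EuclideanSpace ℝ (Fin n) → ℝ) (x : EuclideanSpace ℝ (Fin n)) : ℝ :=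
  moreauLowerLoc lam Ω (moreauUpperLoc lam Ω g) x

/-- Global lower compensated convex transform `C^l_λ(g) = M^λ(M_λ(g))`. -/
def lowerCC {n : ℕ} (lam : ℝ) (g : EuclideanSpace ℝ (Fin n) → ℝ)
    (x : EuclideanSpace ℝ (Fin n)) : ℝ :=
  moreauUpper lam (moreauLower lam g) x

/-- Global upper compensated convex transform `C^u_λ(g) = M_λ(M^λ(g))`. -/
def upperCC {n : ℕ} (lam : ℝ) (g : EuclideanSpace ℝ (Fin n) → ℝ)
    (x : EuclideanSpace ℝ (Fin n)) : ℝ :=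
  moreauLower lam (moreauUpper lam g) x

lemma sInf_neg_image' (s : Set ℝ) : sInf (Neg.neg '' s) = - sSup s := by
  have h : Neg.neg '' s = -s := by
    ext a
    constructor
    · rintro ⟨b, hb, rfl⟩; simpa [Set.mem_neg]
    · intro ha; exact ⟨-a, ha, by simp⟩
  rw [h, Real.sInf_def, neg_neg]

lemma cross' {n : ℕ} (Ω : Set (EuclideanSpace ℝ (Fin n))) (hΩo : IsOpen Ω)
    {x z : EuclideanSpace ℝ (Fin n)} (hx : x ∈ closure Ω) (hz : z ∉ closure Ω) :
    ∃ w, w ∈ closure Ω ∧ w ∉ Ω ∧ ‖w - x‖ ≤ ‖z - x‖ := by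
  set φ : ℝ → EuclideanSpace ℝ (Fin n) := fun t => x + t • (z - x) with hφdef
  have hφc : Continuous φ := by fun_prop
  set S : Set ℝ := Set.Icc (0:ℝ) 1 ∩ φ ⁻¹' closure Ω with hS
  have hSclosed : IsClosed S := isClosed_Icc.inter (isClosed_closure.preimage hφc)
  have h0 : (0:ℝ) ∈ S := ⟨⟨le_refl _, zero_le_one⟩, by simp [φ, hx]⟩
  have hbdd : BddAbove S := BddAbove.mono Set.inter_subset_left bddAbove_Icc
  set t := sSup S with ht
  have htS : t ∈ S := hSclosed.csSup_mem ⟨0, h0⟩ hbdd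
  obtain ⟨⟨ht0, ht1⟩, htc⟩ := htS
  have hφ1 : φ 1 = z := by simp [φ]
  refine ⟨φ t, htc, ?_, ?_⟩
  · intro hmem
    have ht1' : t < 1 := by
      rcases lt_or_eq_of_le ht1 with h | h
      · exact h
      · exact absurd (h ▸ htc) (by simp only [Set.mem_preimage, hφ1]; exact hz)
    have hnhds : φ ⁻¹' Ω ∈ nhds t := (hΩo.preimage hφc).mem_nhds hmem
    obtain ⟨ε, hε, hball⟩ := Metric.mem_nhds_iff.1 hnhds
    set t' := min (t + ε/2) 1 with ht'
    have htt' : t < t' := lt_min (by linarith) ht1'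
    have ht'S : t' ∈ S := by
      refine ⟨⟨by linarith, min_le_right _ _⟩, subset_closure (hball ?_)⟩
      have h1 : t' ≤ t + ε/2 := min_le_left _ _
      simp only [Metric.mem_ball, Real.dist_eq]
      rw [abs_of_pos (by linarith)]
      linarith
    have := le_csSup hbdd ht'S
    linarith
  · have hsub : φ t - x = t • (z - x) := by simp [φ]
    rw [hsub, norm_smul]
    have habs : |t| ≤ 1 := abs_le.2 ⟨by linarith, ht1⟩
    calc ‖t‖ * ‖z - x‖ ≤ 1 * ‖z - x‖ := by
          apply mul_le_mul_of_nonneg_right _ (norm_nonneg _)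
          simpa using habs
      _ = ‖z - x‖ := one_mul _


lemma moreauLowerLoc_neg' {n : ℕ} (lam : ℝ) (Ω : Set (EuclideanSpace ℝ (Fin n)))
    (g : EuclideanSpace ℝ (Fin n) → ℝ) (x : EuclideanSpace ℝ (Fin n)) :
    moreauLowerLoc lam Ω (fun y => -g y) x = - moreauUpperLoc lam Ω g x := by
  unfold moreauLowerLoc moreauUpperLoc
  rw [← sInf_neg_image', ← Set.image_comp]
  congr 1
  apply Set.image_congr'
  intro y
  simp [Function.comp]
  ring

lemma moreauUpperLoc_neg' {n : ℕ} (lam : ℝ) (Ω : Set (EuclideanSpace ℝ (Fin n)))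
    (g : EuclideanSpace ℝ (Fin n) → ℝ) (x : EuclideanSpace ℝ (Fin n)) :
    moreauUpperLoc lam Ω (fun y => -g y) x = - moreauLowerLoc lam Ω g x := by
  have h := moreauLowerLoc_neg' lam Ω (fun y => -g y) x
  simp only [neg_neg] at h
  linarith

lemma moreauLower_neg' {n : ℕ} (lam : ℝ) (g : EuclideanSpace ℝ (Fin n) → ℝ)
    (x : EuclideanSpace ℝ (Fin n)) :
    moreauLower lam (fun y => -g y) x = - moreauUpper lam g x := by
  unfold moreauLower moreauUpper
  have hfe : (fun y => -g y + lam * ‖y - x‖ ^ 2)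
      = (Neg.neg ∘ fun y => g y - lam * ‖y - x‖ ^ 2) := by
    funext y; simp [Function.comp]; ring
  rw [iInf, iSup, hfe, Set.range_comp, sInf_neg_image']

lemma moreauUpper_neg' {n : ℕ} (lam : ℝ) (g : EuclideanSpace ℝ (Fin n) → ℝ)
    (x : EuclideanSpace ℝ (Fin n)) :
    moreauUpper lam (fun y => -g y) x = - moreauLower lam g x := by
  have h := moreauLower_neg' lam (fun y => -g y) x
  simp only [neg_neg] at h
  linarith

lemma extMinus_neg' {n : ℕ} (Ω : Set (EuclideanSpace ℝ (Fin n)))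
    (f : EuclideanSpace ℝ (Fin n) → ℝ) :
    extMinus Ω (fun y => -f y) = fun x => - extPlus Ω f x := by
  funext x
  unfold extMinus extPlus
  split_ifs with h
  · rfl
  · rw [← sInf_neg_image', ← Set.image_comp]
    rfl

lemma core' {n : ℕ} (Ω : Set (EuclideanSpace ℝ (Fin n))) (hΩo : IsOpen Ω)
    (f : EuclideanSpace ℝ (Fin n) → ℝ) (C : ℝ) (hC : ∀ y ∈ Ω, |f y| ≤ C)
    (lam : ℝ) (hlam : 0 < lam) {x : EuclideanSpace ℝ (Fin n)} (hx : x ∈ closure Ω) :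
    moreauUpperLoc lam Ω (moreauLowerLoc lam Ω (extMinus Ω f)) x
      = moreauUpper lam (moreauLower lam (extMinus Ω f)) x := by
  have hne : Ω.Nonempty := by
    by_contra hemp
    rw [Set.not_nonempty_iff_eq_empty] at hemp
    simp [hemp] at hx
  obtain ⟨y₀, hy₀⟩ := hne
  set m := sInf (f '' Ω) with hm
  set g := extMinus Ω f with hgdef
  have himbdd : BddBelow (f '' Ω) := by
    refine ⟨-C, ?_⟩
    rintro a ⟨y, hy, rfl⟩
    linarith [(abs_le.1 (hC y hy)).1]
  have hmle : m ≤ C :=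
    le_trans (csInf_le himbdd ⟨y₀, hy₀, rfl⟩) ((abs_le.1 (hC y₀ hy₀)).2)
  have hg_ge : ∀ y, m ≤ g y := by
    intro y
    rw [hgdef]
    unfold extMinus
    split_ifs with h
    · exact csInf_le himbdd ⟨y, h, rfl⟩
    · exact le_refl _
  have hg_le : ∀ y, g y ≤ C := by
    intro y
    rw [hgdef]
    unfold extMinus
    split_ifs with h
    · exact (abs_le.1 (hC y h)).2
    · exact hmle
  have hg_out : ∀ y, y ∉ Ω → g y = m := fun y h => if_neg h
  set L := moreauLower lam g with hLdef
  have hLbdd : ∀ z, BddBelow (Set.range fun y => g y + lam * ‖y - z‖ ^ 2) := by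
    intro z
    refine ⟨m, ?_⟩
    rintro a ⟨y, rfl⟩
    show m ≤ g y + lam * ‖y - z‖ ^ 2
    have h2 : 0 ≤ lam * ‖y - z‖ ^ 2 := by positivity
    linarith [hg_ge y]
  have hL_ge : ∀ z, m ≤ L z := by
    intro z
    apply le_ciInf
    intro y
    show m ≤ g y + lam * ‖y - z‖ ^ 2
    have h2 : 0 ≤ lam * ‖y - z‖ ^ 2 := by positivity
    linarith [hg_ge y]
  have hL_le : ∀ z, L z ≤ g z := by
    intro z
    have h := ciInf_le (hLbdd z) z
    simp at h; exact h
  have stepA : ∀ z ∈ closure Ω, moreauLowerLoc lam Ω g z = L z := by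
    intro z hzc
    have hLocbdd : BddBelow ((fun y => g y + lam * ‖y - z‖ ^ 2) '' closure Ω) := by
      refine ⟨m, ?_⟩
      rintro a ⟨y, hy, rfl⟩
      show m ≤ g y + lam * ‖y - z‖ ^ 2
      have h2 : 0 ≤ lam * ‖y - z‖ ^ 2 := by positivity
      linarith [hg_ge y]
    apply le_antisymm
    · apply le_ciInf
      intro y
      show moreauLowerLoc lam Ω g z ≤ g y + lam * ‖y - z‖ ^ 2
      by_cases hy : y ∈ closure Ω
      · exact csInf_le hLocbdd ⟨y, hy, rfl⟩
      · obtain ⟨w, hw1, hw2, hw3⟩ := cross' Ω hΩo hzc hy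
        have hkey : g w + lam * ‖w - z‖ ^ 2 ≤ g y + lam * ‖y - z‖ ^ 2 := by
          rw [hg_out w hw2, hg_out y (fun h => hy (subset_closure h))]
          have hp : ‖w - z‖ ^ 2 ≤ ‖y - z‖ ^ 2 :=
            pow_le_pow_left₀ (norm_nonneg _) hw3 2
          nlinarith [hp, hlam.le]
        exact le_trans (csInf_le hLocbdd ⟨w, hw1, rfl⟩) hkey
    · refine le_csInf ⟨_, ⟨z, hzc, rfl⟩⟩ ?_
      rintro b ⟨y, hy, rfl⟩
      exact ciInf_le (hLbdd z) y
  have hterm_le : ∀ z, L z - lam * ‖z - x‖ ^ 2 ≤ C := by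
    intro z
    have h1 := hL_le z
    have h2 := hg_le z
    have h3 : 0 ≤ lam * ‖z - x‖ ^ 2 := by positivity
    linarith
  show moreauUpperLoc lam Ω (moreauLowerLoc lam Ω g) x = moreauUpper lam L x
  unfold moreauUpperLoc moreauUpper
  have hbddim : BddAbove
      ((fun z => moreauLowerLoc lam Ω g z - lam * ‖z - x‖ ^ 2) '' closure Ω) := by
    refine ⟨C, ?_⟩
    rintro a ⟨z', hz', rfl⟩
    show moreauLowerLoc lam Ω g z' - lam * ‖z' - x‖ ^ 2 ≤ C
    rw [stepA z' hz']
    exact hterm_le z'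
  have hbddrange : BddAbove (Set.range fun z => L z - lam * ‖z - x‖ ^ 2) := by
    refine ⟨C, ?_⟩
    rintro a ⟨z', rfl⟩
    exact hterm_le z'
  apply le_antisymm
  · refine csSup_le ⟨_, ⟨x, hx, rfl⟩⟩ ?_
    rintro b ⟨z, hz, rfl⟩
    show moreauLowerLoc lam Ω g z - lam * ‖z - x‖ ^ 2 ≤ ⨆ y, L y - lam * ‖y - x‖ ^ 2
    rw [stepA z hz]
    exact le_ciSup hbddrange z
  · apply ciSup_le
    intro z
    show L z - lam * ‖z - x‖ ^ 2 ≤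
      sSup ((fun z => moreauLowerLoc lam Ω g z - lam * ‖z - x‖ ^ 2) '' closure Ω)
    by_cases hz : z ∈ closure Ω
    · refine le_csSup hbddim ⟨z, hz, ?_⟩
      show moreauLowerLoc lam Ω g z - lam * ‖z - x‖ ^ 2 = L z - lam * ‖z - x‖ ^ 2
      rw [stepA z hz]
    · obtain ⟨w, hw1, hw2, hw3⟩ := cross' Ω hΩo hx hz
      have hkey : L z - lam * ‖z - x‖ ^ 2
          ≤ moreauLowerLoc lam Ω g w - lam * ‖w - x‖ ^ 2 := by
        have h1 : L z ≤ m :=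
          le_trans (hL_le z) (le_of_eq (hg_out z (fun h => hz (subset_closure h))))
        have h2 : m ≤ L w := hL_ge w
        rw [stepA w hw1]
        have hp : ‖w - x‖ ^ 2 ≤ ‖z - x‖ ^ 2 :=
          pow_le_pow_left₀ (norm_nonneg _) hw3 2
        nlinarith [hp, hlam.le]
      exact le_trans hkey (le_csSup hbddim ⟨w, hw1, rfl⟩)

/-- For `Ω ⊂ ℝⁿ` bounded open, `f : Ω → ℝ` bounded and `λ > 0`, for every
`x ∈ closure Ω` the local and global mixed Moreau envelopes of the extensions agree;
consequently `C^l_{λ,Ω}(f⁻_Ω̄)(x) = C^l_λ(f⁻_ℝⁿ)(x)` and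
`C^u_{λ,Ω}(f⁺_Ω̄)(x) = C^u_λ(f⁺_ℝⁿ)(x)`. -/
theorem local_eq_global_mixed_moreau {n : ℕ} (Ω : Set (EuclideanSpace ℝ (Fin n)))
    (hΩo : IsOpen Ω) (hΩb : Bornology.IsBounded Ω)
    (f : EuclideanSpace ℝ (Fin n) → ℝ)
    (hf : ∃ C : ℝ, ∀ x ∈ Ω, |f x| ≤ C)
    (lam : ℝ) (hlam : 0 < lam) :
    ∀ x ∈ closure Ω,
      moreauUpperLoc lam Ω (moreauLowerLoc lam Ω (extMinus Ω f)) x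
          = moreauUpper lam (moreauLower lam (extMinus Ω f)) x ∧
      moreauLowerLoc lam Ω (moreauUpperLoc lam Ω (extPlus Ω f)) x
          = moreauLower lam (moreauUpper lam (extPlus Ω f)) x ∧
      lowerCCLoc lam Ω (extMinus Ω f) x = lowerCC lam (extMinus Ω f) x ∧
      upperCCLoc lam Ω (extPlus Ω f) x = upperCC lam (extPlus Ω f) x := by
  intro x hx
  obtain ⟨C, hC⟩ := hf
  have h1 := core' Ω hΩo f C hC lam hlam hx
  have h2' := core' Ω hΩo (fun y => -f y) C
    (by intro y hy; simpa using hC y hy) lam hlam hx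
  rw [extMinus_neg' Ω f] at h2'
  have e1 : (moreauLowerLoc lam Ω fun y => -extPlus Ω f y)
      = fun z => -(moreauUpperLoc lam Ω (extPlus Ω f) z) :=
    funext fun z => moreauLowerLoc_neg' lam Ω (extPlus Ω f) z
  have e2 : (moreauLower lam fun y => -extPlus Ω f y)
      = fun z => -(moreauUpper lam (extPlus Ω f) z) :=
    funext fun z => moreauLower_neg' lam (extPlus Ω f) z
  rw [e1, e2] at h2'
  rw [moreauUpperLoc_neg' lam Ω (moreauUpperLoc lam Ω (extPlus Ω f)) x,
    moreauUpper_neg' lam (moreauUpper lam (extPlus Ω f)) x] at h2'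
  have h2 : moreauLowerLoc lam Ω (moreauUpperLoc lam Ω (extPlus Ω f)) x
      = moreauLower lam (moreauUpper lam (extPlus Ω f)) x := by linarith
  exact ⟨h1, h2, h1, h2⟩
end
end

section
/- Let Ω ⊂ ℝⁿ be a bounded open set, f : Ω → ℝ bounded with oscillation O_f = sup_Ω f − inf_Ω f, and λ > 0. If x ∈ Ω satisfies dist²(x, ∂Ω) > O_f/λ and z_x ∈ closure(Ω) satisfies M_{λ,Ω}(f⁻_Ω̄)(x) = f⁻_Ω̄(z_x) + λ|z_x − x|², then z_x ∈ Ω; that is, M_{λ,Ω}(f⁻_Ω̄)(x) is determined by values of f on Ω. -/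
noncomputable section
attribute [local instance] Classical.propDecidable

/-! If the minimizer `z_x` lay on `∂Ω`, then `f⁻_Ω̄(z_x) = inf_Ω f` and `λ|z_x − x|² ≥ λ dist²(x, ∂Ω) > O_f`,
so the value attained at `z_x` would exceed `sup_Ω f ≥ f(x)`, which is the value of the competitor `y = x`. -/

section MoreauLowerLoc

variable {n : ℕ} {Ω : Set (EuclideanSpace ℝ (Fin n))} {f g : EuclideanSpace ℝ (Fin n) → ℝ}

theorem extMinus_of_mem {x : EuclideanSpace ℝ (Fin n)} (hx : x ∈ Ω) : extMinus Ω f x = f x :=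
  if_pos hx

theorem extMinus_of_notMem {x : EuclideanSpace ℝ (Fin n)} (hx : x ∉ Ω) :
    extMinus Ω f x = sInf (f '' Ω) :=
  if_neg hx

theorem sInf_image_le_extMinus (hf : BddBelow (f '' Ω)) (x : EuclideanSpace ℝ (Fin n)) :
    sInf (f '' Ω) ≤ extMinus Ω f x := by
  by_cases hx : x ∈ Ω
  · rw [extMinus_of_mem hx]
    exact csInf_le hf (Set.mem_image_of_mem f hx)
  · rw [extMinus_of_notMem hx]

theorem moreauLowerLoc_le {lam : ℝ} (hlam : 0 ≤ lam) (hg : BddBelow (g '' closure Ω))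
    (x : EuclideanSpace ℝ (Fin n)) {y : EuclideanSpace ℝ (Fin n)} (hy : y ∈ closure Ω) :
    moreauLowerLoc lam Ω g x ≤ g y + lam * ‖y - x‖ ^ 2 := by
  refine csInf_le ?_ (Set.mem_image_of_mem _ hy)
  obtain ⟨m, hm⟩ := hg
  refine ⟨m, Set.forall_mem_image.mpr fun z hz => ?_⟩
  have : 0 ≤ lam * ‖z - x‖ ^ 2 := by positivity
  linarith [hm (Set.mem_image_of_mem g hz)]

theorem moreauLowerLoc_le_self {lam : ℝ} (hlam : 0 ≤ lam) (hg : BddBelow (g '' closure Ω))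
    {x : EuclideanSpace ℝ (Fin n)} (hx : x ∈ closure Ω) : moreauLowerLoc lam Ω g x ≤ g x := by
  simpa using moreauLowerLoc_le hlam hg x hx

end MoreauLowerLoc

theorem moreauLowerLoc_locality_general {n : ℕ} (Ω : Set (EuclideanSpace ℝ (Fin n)))
    (hΩo : IsOpen Ω)
    (f : EuclideanSpace ℝ (Fin n) → ℝ)
    (hf : ∃ C : ℝ, ∀ x ∈ Ω, |f x| ≤ C)
    (lam : ℝ) (hlam : 0 < lam)
    (x : EuclideanSpace ℝ (Fin n)) (hx : x ∈ Ω)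
    (hdist : (Metric.infDist x (frontier Ω)) ^ 2
        > (sSup (f '' Ω) - sInf (f '' Ω)) / lam)
    (z_x : EuclideanSpace ℝ (Fin n)) (hz : z_x ∈ closure Ω)
    (hatt : moreauLowerLoc lam Ω (extMinus Ω f) x
        = extMinus Ω f z_x + lam * ‖z_x - x‖ ^ 2) :
    z_x ∈ Ω := by
  by_contra hzΩ
  have hbdd : Bornology.IsBounded (f '' Ω) :=
    isBounded_iff_forall_norm_le.mpr (hf.imp fun C hC => Set.forall_mem_image.mpr hC)
  have hext : BddBelow (extMinus Ω f '' closure Ω) :=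
    ⟨sInf (f '' Ω), Set.forall_mem_image.mpr fun y _ => sInf_image_le_extMinus hbdd.bddBelow y⟩
  have hdist_le : Metric.infDist x (frontier Ω) ≤ ‖z_x - x‖ := by
    rw [← dist_eq_norm, dist_comm]
    exact Metric.infDist_le_dist_of_mem (hΩo.frontier_eq ▸ ⟨hz, hzΩ⟩)
  have hosc : sSup (f '' Ω) - sInf (f '' Ω) < lam * ‖z_x - x‖ ^ 2 :=
    calc sSup (f '' Ω) - sInf (f '' Ω) < lam * Metric.infDist x (frontier Ω) ^ 2 :=
          (div_lt_iff₀' hlam).mp hdist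
      _ ≤ lam * ‖z_x - x‖ ^ 2 := by gcongr; exact Metric.infDist_nonneg
  refine lt_irrefl (moreauLowerLoc lam Ω (extMinus Ω f) x) ?_
  calc moreauLowerLoc lam Ω (extMinus Ω f) x
      ≤ extMinus Ω f x := moreauLowerLoc_le_self hlam.le hext (subset_closure hx)
    _ = f x := extMinus_of_mem hx
    _ ≤ sSup (f '' Ω) := le_csSup hbdd.bddAbove (Set.mem_image_of_mem f hx)
    _ < extMinus Ω f z_x + lam * ‖z_x - x‖ ^ 2 := by rw [extMinus_of_notMem hzΩ]; linarith
    _ = moreauLowerLoc lam Ω (extMinus Ω f) x := hatt.symm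

/-- If `x ∈ Ω` with `dist²(x,∂Ω) > O_f/λ` and `z_x ∈ closure Ω` attains
`M_{λ,Ω}(f⁻_Ω̄)(x) = f⁻_Ω̄(z_x) + λ|z_x − x|²`, then `z_x ∈ Ω`: the value is
determined by values of `f` on `Ω`. -/
theorem moreauLowerLoc_locality {n : ℕ} (Ω : Set (EuclideanSpace ℝ (Fin n)))
    (hΩo : IsOpen Ω) (hΩb : Bornology.IsBounded Ω)
    (f : EuclideanSpace ℝ (Fin n) → ℝ)
    (hf : ∃ C : ℝ, ∀ x ∈ Ω, |f x| ≤ C)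
    (lam : ℝ) (hlam : 0 < lam)
    (x : EuclideanSpace ℝ (Fin n)) (hx : x ∈ Ω)
    (hdist : (Metric.infDist x (frontier Ω)) ^ 2
        > (sSup (f '' Ω) - sInf (f '' Ω)) / lam)
    (z_x : EuclideanSpace ℝ (Fin n)) (hz : z_x ∈ closure Ω)
    (hatt : moreauLowerLoc lam Ω (extMinus Ω f) x
        = extMinus Ω f z_x + lam * ‖z_x - x‖ ^ 2) :
    z_x ∈ Ω :=
  moreauLowerLoc_locality_general Ω hΩo f hf lam hlam x hx hdist z_x hz hatt
end
end

section
/- Let Ω ⊂ ℝⁿ be a bounded open set, f : Ω → ℝ bounded with oscillation O_f = sup_Ω f − inf_Ω f, and λ > 0. If x ∈ Ω satisfies dist²(x, ∂Ω) > 4·O_f/λ and z_x ∈ closure(Ω) satisfies M^λ_Ω(M_{λ,Ω}(f⁻_Ω̄))(x) = M_{λ,Ω}(f⁻_Ω̄)(z_x) − λ|z_x − x|², then M^λ_Ω(M_{λ,Ω}(f⁻_Ω̄))(x) is determined by values of f on Ω, in the sense that if M_{λ,Ω}(f⁻_Ω̄)(z_x) = f⁻_Ω̄(y_x) + λ|y_x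 − z_x|² for some y_x ∈ closure(Ω), then both z_x ∈ Ω and y_x ∈ Ω. -/
noncomputable section
attribute [local instance] Classical.propDecidable

/-- If `x ∈ Ω` with `dist²(x,∂Ω) > 4·O_f/λ` and `z_x ∈ closure Ω` attains
`M^λ_Ω(M_{λ,Ω}(f⁻_Ω̄))(x) = M_{λ,Ω}(f⁻_Ω̄)(z_x) − λ|z_x − x|²`, then the value is
determined by values of `f` on `Ω`: whenever `y_x ∈ closure Ω` attains
`M_{λ,Ω}(f⁻_Ω̄)(z_x) = f⁻_Ω̄(y_x) + λ|y_x − z_x|²`, both `z_x ∈ Ω` and `y_x ∈ Ω`. -/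
theorem mixed_moreauLoc_locality {n : ℕ} (Ω : Set (EuclideanSpace ℝ (Fin n)))
    (hΩo : IsOpen Ω) (hΩb : Bornology.IsBounded Ω)
    (f : EuclideanSpace ℝ (Fin n) → ℝ)
    (hf : ∃ C : ℝ, ∀ x ∈ Ω, |f x| ≤ C)
    (lam : ℝ) (hlam : 0 < lam)
    (x : EuclideanSpace ℝ (Fin n)) (hx : x ∈ Ω)
    (hdist : (Metric.infDist x (frontier Ω)) ^ 2
        > 4 * (sSup (f '' Ω) - sInf (f '' Ω)) / lam)
    (z_x : EuclideanSpace ℝ (Fin n)) (hz : z_x ∈ closure Ω)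
    (hatt : moreauUpperLoc lam Ω (moreauLowerLoc lam Ω (extMinus Ω f)) x
        = moreauLowerLoc lam Ω (extMinus Ω f) z_x - lam * ‖z_x - x‖ ^ 2) :
    ∀ y_x ∈ closure Ω,
      moreauLowerLoc lam Ω (extMinus Ω f) z_x
          = extMinus Ω f y_x + lam * ‖y_x - z_x‖ ^ 2 →
      z_x ∈ Ω ∧ y_x ∈ Ω := by
  intro y_x hy hatty
  obtain ⟨C, hC⟩ := hf
  set m := sInf (f '' Ω) with hm
  set M := sSup (f '' Ω) with hM
  have hne : (f '' Ω).Nonempty := ⟨f x, x, hx, rfl⟩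
  have hba : BddAbove (f '' Ω) := ⟨C, by rintro _ ⟨a, ha, rfl⟩; exact (abs_le.1 (hC a ha)).2⟩
  have hbb : BddBelow (f '' Ω) := ⟨-C, by rintro _ ⟨a, ha, rfl⟩; exact (abs_le.1 (hC a ha)).1⟩
  have hmM : m ≤ M := csInf_le_csSup hne hbb hba
  have hg_lb : ∀ p, m ≤ extMinus Ω f p := by
    intro p
    unfold extMinus
    split
    · exact csInf_le hbb ⟨p, by assumption, rfl⟩
    · exact le_rfl
  have hg_ub : ∀ p, extMinus Ω f p ≤ M := by
    intro p
    unfold extMinus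
    split
    · exact le_csSup hba ⟨p, by assumption, rfl⟩
    · exact hmM
  set g := extMinus Ω f with hg
  set L := moreauLowerLoc lam Ω g with hL
  have hxc : x ∈ closure Ω := subset_closure hx
  have hLbddb : ∀ z, BddBelow ((fun y => g y + lam * ‖y - z‖ ^ 2) '' closure Ω) := by
    intro z
    refine ⟨m, ?_⟩
    rintro _ ⟨p, hp, rfl⟩
    show m ≤ g p + lam * ‖p - z‖ ^ 2
    have : (0:ℝ) ≤ lam * ‖p - z‖ ^ 2 := by positivity
    linarith [hg_lb p]
  have hL_lb : ∀ z, m ≤ L z := by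
    intro z
    refine le_csInf ⟨_, ⟨x, hxc, rfl⟩⟩ ?_
    rintro _ ⟨p, hp, rfl⟩
    show m ≤ g p + lam * ‖p - z‖ ^ 2
    have : (0:ℝ) ≤ lam * ‖p - z‖ ^ 2 := by positivity
    linarith [hg_lb p]
  have hL_ub : ∀ z ∈ closure Ω, L z ≤ M := by
    intro z hzc
    have h1 : L z ≤ g z + lam * ‖z - z‖ ^ 2 := csInf_le (hLbddb z) ⟨z, hzc, rfl⟩
    have h2 : ‖z - z‖ = 0 := by simp
    rw [h2] at h1
    simp at h1
    linarith [hg_ub z]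
  have hUbdd : BddAbove ((fun z => L z - lam * ‖z - x‖ ^ 2) '' closure Ω) := by
    refine ⟨M, ?_⟩
    rintro _ ⟨p, hp, rfl⟩
    show L p - lam * ‖p - x‖ ^ 2 ≤ M
    have : (0:ℝ) ≤ lam * ‖p - x‖ ^ 2 := by positivity
    linarith [hL_ub p hp]
  have hU_ge : L x - lam * ‖x - x‖ ^ 2 ≤ moreauUpperLoc lam Ω L x :=
    le_csSup hUbdd ⟨x, hxc, rfl⟩
  have hU_ge' : m ≤ moreauUpperLoc lam Ω L x := by
    have h2 : ‖x - x‖ = (0:ℝ) := by simp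
    rw [h2] at hU_ge
    simp at hU_ge
    linarith [hL_lb x]
  -- bounds on the two distances
  have hz2 : lam * ‖z_x - x‖ ^ 2 ≤ M - m := by
    have := hatt ▸ hU_ge'
    linarith [hL_ub z_x hz]
  have hy2 : lam * ‖y_x - z_x‖ ^ 2 ≤ M - m := by
    have h1 : L z_x ≤ M := hL_ub z_x hz
    have h2 : m ≤ g y_x := hg_lb y_x
    rw [hatty] at h1
    linarith
  set d := Metric.infDist x (frontier Ω) with hd
  have hd0 : 0 ≤ d := Metric.infDist_nonneg
  have hO : (0:ℝ) ≤ M - m := by linarith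
  have hlamd : 4 * (M - m) < lam * d ^ 2 := by
    have := (div_lt_iff₀ hlam).mp hdist
    linarith
  have hzd : ‖z_x - x‖ < d / 2 := by
    have hsq : ‖z_x - x‖ ^ 2 < (d / 2) ^ 2 := by
      have := hz2
      nlinarith
    exact lt_of_pow_lt_pow_left₀ 2 (by linarith) hsq
  have hyd : ‖y_x - z_x‖ < d / 2 := by
    have hsq : ‖y_x - z_x‖ ^ 2 < (d / 2) ^ 2 := by nlinarith
    exact lt_of_pow_lt_pow_left₀ 2 (by linarith) hsq
  have hdpos : 0 < d := by
    have hd2 : 0 < d ^ 2 := lt_of_le_of_lt (div_nonneg (by linarith) hlam.le) hdist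
    nlinarith
  have hΩne : Ω ≠ Set.univ := by
    intro h
    rw [h] at hd
    simp [frontier_univ, Metric.infDist_empty] at hd
    rw [hd] at hdpos
    exact lt_irrefl _ hdpos
  obtain ⟨w, hw, hwd⟩ := exists_mem_frontier_infDist_compl_eq_dist hx hΩne
  have hd_le : d ≤ Metric.infDist x Ωᶜ := by
    rw [hwd]
    exact Metric.infDist_le_dist_of_mem hw
  have key : ∀ p : EuclideanSpace ℝ (Fin n), ‖p - x‖ < d → p ∈ Ω := by
    intro p hp
    apply Metric.ball_infDist_compl_subset
    rw [Metric.mem_ball, dist_eq_norm]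
    exact lt_of_lt_of_le hp hd_le
  have hzΩ : z_x ∈ Ω := key z_x (by linarith)
  have hyΩ : y_x ∈ Ω := by
    apply key
    calc ‖y_x - x‖ ≤ ‖y_x - z_x‖ + ‖z_x - x‖ := norm_sub_le_norm_sub_add_norm_sub _ _ _
    _ < d := by linarith
  exact ⟨hzΩ, hyΩ⟩
end
end

section
/- Let Ω ⊂ ℝⁿ be an open set and K ⊂ Ω a non-empty compact set. Let f(x) = dist²(x, K ∪ Ω^c) for x ∈ ℝⁿ and let f⁻_Ω̄ be its extension to closure(Ω) with value inf_Ω f on ∂Ω. Then for every x ∈ closure(Ω): ℳ(λ; K ∪ Ω^c)(x) = (1 + λ)·(f⁻_Ω̄(x) − C^l_{λ,Ω}(f⁻_Ω̄)(x)). -/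
noncomputable section
attribute [local instance] Classical.propDecidable

/-- The quadratic multiscale medial axis map
`ℳ(λ; S)(x) = (1+λ)(dist²(x,S) − C^l_λ(dist²(·,S))(x))`, with
`C^l_λ(g) = M^λ(M_λ(g))`. -/
def medialAxisMap {n : ℕ} (lam : ℝ) (S : Set (EuclideanSpace ℝ (Fin n)))
    (x : EuclideanSpace ℝ (Fin n)) : ℝ :=
  (1 + lam) * ((Metric.infDist x S) ^ 2
    - moreauUpper lam (moreauLower lam (fun y => (Metric.infDist y S) ^ 2)) x)

/-!
The function `f = dist²(·, K ∪ Ωᶜ) ≥ 0` vanishes on `K ⊆ Ω` and off `Ω`, so `inf_Ω f = 0` and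
`f⁻_Ω̄ = f`.
For `x ∈ closure Ω` and `y ∉ closure Ω` there is a point `z ∈ closure Ω \ Ω` at least as close
to `x` as `y`, where `f z = 0`; hence the points outside `closure Ω` never improve the infimum
defining `M_λ(f)(x)`, and `M_λ(f) = M_{λ,Ω}(f)` on `closure Ω`. Moreover `M_λ(f) = 0` off
`closure Ω`, so there the competitors in the supremum defining `M^λ(M_λ f)(x)` are `≤ 0`,
which is beaten by the competitor `y = x`; hence also `M^λ = M^λ_Ω` on `closure Ω`.
-/

theorem exists_mem_closure_diff_dist_le {E : Type*} [NormedAddCommGroup E] [NormedSpace ℝ E]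
    [FiniteDimensional ℝ E] {Ω : Set E} (hΩ : IsOpen Ω) {x y : E} (hx : x ∈ closure Ω)
    (hy : y ∉ closure Ω) : ∃ z ∈ closure Ω \ Ω, dist z x ≤ dist y x := by
  obtain ⟨z, hz, hxz⟩ :=
    exists_mem_frontier_infDist_compl_eq_dist hx fun h => hy (h ▸ Set.mem_univ y)
  refine ⟨z, ⟨isClosed_closure.frontier_subset hz, fun hzΩ => hz.2 ?_⟩, ?_⟩
  · exact hΩ.subset_interior_iff.mpr subset_closure hzΩ
  · rw [dist_comm z, dist_comm y, ← hxz]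
    exact Metric.infDist_le_dist_of_mem hy

theorem extMinus_eq_self {n : ℕ} {Ω : Set (EuclideanSpace ℝ (Fin n))}
    {f : EuclideanSpace ℝ (Fin n) → ℝ} (hf : 0 ≤ f) (hfΩ : ∀ y ∉ Ω, f y = 0)
    (hzero : ∃ k ∈ Ω, f k = 0) : extMinus Ω f = f := by
  have hinf : sInf (f '' Ω) = 0 := by
    obtain ⟨k, hk, hfk⟩ := hzero
    refine IsLeast.csInf_eq ⟨⟨k, hk, hfk⟩, ?_⟩
    rintro _ ⟨y, -, rfl⟩
    exact hf y
  funext y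
  by_cases hy : y ∈ Ω
  · simp only [extMinus, hy, if_true]
  · simp only [extMinus, hy, if_false, hinf, hfΩ y hy]

section MoreauEnvelopes

variable {n : ℕ} {lam : ℝ} {g : EuclideanSpace ℝ (Fin n) → ℝ}

theorem moreauLower_le (hlam : 0 ≤ lam) (hg : 0 ≤ g) (x y : EuclideanSpace ℝ (Fin n)) :
    moreauLower lam g x ≤ g y + lam * ‖y - x‖ ^ 2 :=
  ciInf_le ⟨0, by rintro _ ⟨z, rfl⟩; exact add_nonneg (hg z) (by positivity)⟩ y

theorem moreauLower_nonneg (hlam : 0 ≤ lam) (hg : 0 ≤ g) (x : EuclideanSpace ℝ (Fin n)) :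
    0 ≤ moreauLower lam g x :=
  le_ciInf fun y => add_nonneg (hg y) (by positivity)

theorem moreauLower_eq_zero (hlam : 0 ≤ lam) (hg : 0 ≤ g) {x : EuclideanSpace ℝ (Fin n)}
    (hx : g x = 0) : moreauLower lam g x = 0 :=
  le_antisymm (by simpa [hx] using moreauLower_le hlam hg x x) (moreauLower_nonneg hlam hg x)

theorem bddAbove_range_moreauLower_sub (hlam : 0 ≤ lam) (hg : 0 ≤ g)
    (x : EuclideanSpace ℝ (Fin n)) :
    BddAbove (Set.range fun y => moreauLower lam g y - lam * ‖y - x‖ ^ 2) := by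
  refine ⟨g x, ?_⟩
  rintro _ ⟨y, rfl⟩
  have := moreauLower_le hlam hg y x
  rw [norm_sub_rev] at this
  linarith

theorem moreauLower_eq_moreauLowerLoc {Ω : Set (EuclideanSpace ℝ (Fin n))} (hΩ : IsOpen Ω)
    (hlam : 0 ≤ lam) (hg : 0 ≤ g) (hgΩ : ∀ y ∉ Ω, g y = 0) {x : EuclideanSpace ℝ (Fin n)}
    (hx : x ∈ closure Ω) : moreauLower lam g x = moreauLowerLoc lam Ω g x := by
  have hbdd : BddBelow ((fun y => g y + lam * ‖y - x‖ ^ 2) '' closure Ω) :=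
    ⟨0, by rintro _ ⟨y, -, rfl⟩; exact add_nonneg (hg y) (by positivity)⟩
  refine le_antisymm ?_ (le_ciInf fun y => ?_)
  · refine le_csInf (Set.Nonempty.image _ ⟨x, hx⟩) ?_
    rintro _ ⟨y, -, rfl⟩
    exact moreauLower_le hlam hg x y
  by_cases hy : y ∈ closure Ω
  · exact csInf_le hbdd ⟨y, hy, rfl⟩
  obtain ⟨z, ⟨hzcl, hzΩ⟩, hxz⟩ := exists_mem_closure_diff_dist_le hΩ hx hy
  rw [dist_eq_norm, dist_eq_norm] at hxz
  calc moreauLowerLoc lam Ω g x ≤ g z + lam * ‖z - x‖ ^ 2 := csInf_le hbdd ⟨z, hzcl, rfl⟩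
    _ = lam * ‖z - x‖ ^ 2 := by rw [hgΩ z hzΩ, zero_add]
    _ ≤ lam * ‖y - x‖ ^ 2 := by gcongr
    _ ≤ g y + lam * ‖y - x‖ ^ 2 := le_add_of_nonneg_left (hg y)

theorem moreauUpper_eq_moreauUpperLoc {Ω : Set (EuclideanSpace ℝ (Fin n))} (hlam : 0 ≤ lam)
    {h : EuclideanSpace ℝ (Fin n) → ℝ} (hh : 0 ≤ h) (hhΩ : ∀ y ∉ closure Ω, h y = 0)
    {x : EuclideanSpace ℝ (Fin n)} (hx : x ∈ closure Ω)
    (hbdd : BddAbove (Set.range fun y => h y - lam * ‖y - x‖ ^ 2)) :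
    moreauUpper lam h x = moreauUpperLoc lam Ω h x := by
  have hbdd' : BddAbove ((fun y => h y - lam * ‖y - x‖ ^ 2) '' closure Ω) :=
    hbdd.mono (Set.image_subset_range _ _)
  refine le_antisymm (ciSup_le fun y => ?_) ?_
  · by_cases hy : y ∈ closure Ω
    · exact le_csSup hbdd' ⟨y, hy, rfl⟩
    calc h y - lam * ‖y - x‖ ^ 2 ≤ h x - lam * ‖x - x‖ ^ 2 := by
          rw [hhΩ y hy, sub_self, norm_zero, zero_pow two_ne_zero, mul_zero, sub_zero]
          linarith [show 0 ≤ h x from hh x, mul_nonneg hlam (sq_nonneg ‖y - x‖)]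
      _ ≤ moreauUpperLoc lam Ω h x := le_csSup hbdd' ⟨x, hx, rfl⟩
  · refine csSup_le (Set.Nonempty.image _ ⟨x, hx⟩) ?_
    rintro _ ⟨y, -, rfl⟩
    exact le_ciSup hbdd y

theorem moreauUpperLoc_congr {Ω : Set (EuclideanSpace ℝ (Fin n))}
    {h₁ h₂ : EuclideanSpace ℝ (Fin n) → ℝ} (hh : Set.EqOn h₁ h₂ (closure Ω))
    (x : EuclideanSpace ℝ (Fin n)) : moreauUpperLoc lam Ω h₁ x = moreauUpperLoc lam Ω h₂ x := by
  unfold moreauUpperLoc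
  rw [Set.image_congr fun y hy => by rw [hh hy]]

end MoreauEnvelopes

theorem medialAxisMap_eq_local_general {n : ℕ} (Ω K : Set (EuclideanSpace ℝ (Fin n)))
    (hΩo : IsOpen Ω) (hKne : K.Nonempty) (hKΩ : K ⊆ Ω)
    (lam : ℝ) (hlam : 0 < lam) :
    ∀ x ∈ closure Ω,
      medialAxisMap lam (K ∪ Ωᶜ) x
        = (1 + lam) * (extMinus Ω (fun y => (Metric.infDist y (K ∪ Ωᶜ)) ^ 2) x
            - moreauUpperLoc lam Ω (moreauLowerLoc lam Ω
                (extMinus Ω (fun y => (Metric.infDist y (K ∪ Ωᶜ)) ^ 2))) x) := by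
  intro x hx
  set f : EuclideanSpace ℝ (Fin n) → ℝ := fun y => (Metric.infDist y (K ∪ Ωᶜ)) ^ 2
  have hf : 0 ≤ f := fun y => sq_nonneg _
  have hfS : ∀ y ∈ K ∪ Ωᶜ, f y = 0 := fun y hy => by simp [f, Metric.infDist_zero_of_mem hy]
  have hfΩ : ∀ y ∉ Ω, f y = 0 := fun y hy => hfS y (Or.inr hy)
  obtain ⟨k, hk⟩ := hKne
  have hlower : Set.EqOn (moreauLower lam f) (moreauLowerLoc lam Ω f) (closure Ω) :=
    fun y hy => moreauLower_eq_moreauLowerLoc hΩo hlam.le hf hfΩ hy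
  have hlowerΩ : ∀ y ∉ closure Ω, moreauLower lam f y = 0 := fun y hy =>
    moreauLower_eq_zero hlam.le hf (hfΩ y fun hyΩ => hy (subset_closure hyΩ))
  rw [extMinus_eq_self hf hfΩ ⟨k, hKΩ hk, hfS k (Or.inl hk)⟩, medialAxisMap,
    moreauUpper_eq_moreauUpperLoc hlam.le (moreauLower_nonneg hlam.le hf) hlowerΩ hx
      (bddAbove_range_moreauLower_sub hlam.le hf x),
    moreauUpperLoc_congr hlower]

/-- For `Ω ⊂ ℝⁿ` open, `K ⊂ Ω` non-empty compact, `f = dist²(·, K ∪ Ωᶜ)` and its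
extension `f⁻_Ω̄`, one has, for all `x ∈ closure Ω`,
`ℳ(λ; K ∪ Ωᶜ)(x) = (1+λ)(f⁻_Ω̄(x) − C^l_{λ,Ω}(f⁻_Ω̄)(x))`. -/
theorem medialAxisMap_eq_local {n : ℕ} (Ω K : Set (EuclideanSpace ℝ (Fin n)))
    (hΩo : IsOpen Ω) (hK : IsCompact K) (hKne : K.Nonempty) (hKΩ : K ⊆ Ω)
    (lam : ℝ) (hlam : 0 < lam) :
    ∀ x ∈ closure Ω,
      medialAxisMap lam (K ∪ Ωᶜ) x
        = (1 + lam) * (extMinus Ω (fun y => (Metric.infDist y (K ∪ Ωᶜ)) ^ 2) x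
            - moreauUpperLoc lam Ω (moreauLowerLoc lam Ω
                (extMinus Ω (fun y => (Metric.infDist y (K ∪ Ωᶜ)) ^ 2))) x) :=
  medialAxisMap_eq_local_general Ω K hΩo hKne hKΩ lam hlam
end
end

section
/- Let Ω ⊂ ℝⁿ be an open set, K ⊂ Ω a non-empty compact set, and λ > 0 with dist²(K, ∂Ω) > 1/λ. Let χ_K be the characteristic function of K on ℝⁿ and χ_K^Ω its restriction to closure(Ω). Then for every x ∈ closure(Ω): M^λ_Ω(χ_K^Ω)(x) = M^λ(χ_K)(x), M_{λ,Ω}(M^λ_Ω(χ_K^Ω))(x) = M_λ(M^λ(χ_K))(x), and consequently C^u_{λ,Ω}(χ_K^Ω)(x) = C^u_λ(χ_K)(x). -/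
/-!
Since `χ_K` vanishes off `K ⊆ closure Ω`, in the supremum defining `M^λ(χ_K)(x)` every point
outside `closure Ω` is beaten by `y = x`; so the upper envelopes agree on `closure Ω`.
The assumption `λ · dist²(K, ∂Ω) > 1` forces `M^λ(χ_K) ≤ 0` on `∂Ω`, while `M^λ(χ_K) ≥ χ_K ≥ 0`
everywhere. In the infimum defining `M_λ(M^λ(χ_K))(x)`, a point `y` outside `closure Ω` is
therefore beaten by the point where the segment `[x, y]` crosses `∂Ω`: it is closer to `x` and
carries the least possible value `0`.
-/

noncomputable section
attribute [local instance] Classical.propDecidable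

/-- The characteristic function `χ_K` of a set `K`. -/
def charFun {n : ℕ} (K : Set (EuclideanSpace ℝ (Fin n)))
    (x : EuclideanSpace ℝ (Fin n)) : ℝ :=
  if x ∈ K then 1 else 0

open Set

theorem IsPreconnected.inter_frontier_nonempty {α : Type*} [TopologicalSpace α] {S A : Set α}
    (hS : IsPreconnected S) (hin : (S ∩ closure A).Nonempty) (hout : (S \ A).Nonempty) :
    (S ∩ frontier A).Nonempty := by
  obtain ⟨y, hyS, hyA⟩ := hout
  rw [frontier_eq_closure_inter_closure]
  refine isPreconnected_closed_iff.1 hS _ _ isClosed_closure isClosed_closure ?_ hin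
    ⟨y, hyS, subset_closure hyA⟩
  intro z _
  by_cases hz : z ∈ A
  · exact .inl (subset_closure hz)
  · exact .inr (subset_closure hz)

theorem exists_mem_frontier_dist_le {E : Type*} [SeminormedAddCommGroup E] [NormedSpace ℝ E]
    {A : Set E} {x y : E} (hx : x ∈ closure A) (hy : y ∉ A) :
    ∃ z ∈ frontier A, dist x z ≤ dist x y := by
  obtain ⟨z, hz_seg, hz_fr⟩ := (convex_segment x y).isPreconnected.inter_frontier_nonempty
    ⟨x, left_mem_segment ℝ x y, hx⟩ ⟨y, right_mem_segment ℝ x y, hy⟩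
  refine ⟨z, hz_fr, ?_⟩
  linarith [dist_add_dist_of_mem_segment hz_seg, dist_nonneg (x := z) (y := y)]

theorem lt_dist_sq_of_lt_sInf_dist_sq {α : Type*} [PseudoMetricSpace α] {K F : Set α} {c : ℝ}
    (h : c < sInf {d : ℝ | ∃ y ∈ K, ∃ z ∈ F, d = dist y z} ^ 2) {y z : α} (hy : y ∈ K)
    (hz : z ∈ F) : c < dist y z ^ 2 := by
  have hbdd : BddBelow {d : ℝ | ∃ y ∈ K, ∃ z ∈ F, d = dist y z} :=
    ⟨0, by rintro _ ⟨_, _, _, _, rfl⟩; exact dist_nonneg⟩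
  have hinf_nonneg : 0 ≤ sInf {d : ℝ | ∃ y ∈ K, ∃ z ∈ F, d = dist y z} :=
    le_csInf ⟨_, y, hy, z, hz, rfl⟩ (by rintro _ ⟨_, _, _, _, rfl⟩; exact dist_nonneg)
  exact h.trans_le (pow_le_pow_left₀ hinf_nonneg (csInf_le hbdd ⟨y, hy, z, hz, rfl⟩) 2)

theorem sSup_image_eq_iSup_of_forall_exists_le {α : Type*} [Nonempty α] {f : α → ℝ}
    {s : Set α} (hf : BddAbove (range f)) (h : ∀ y, ∃ z ∈ s, f y ≤ f z) :
    sSup (f '' s) = ⨆ y, f y := by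
  obtain ⟨z, hz, -⟩ := h (Classical.arbitrary α)
  refine le_antisymm (csSup_le ⟨_, z, hz, rfl⟩ ?_) (ciSup_le fun y => ?_)
  · rintro _ ⟨y, -, rfl⟩
    exact le_ciSup hf y
  · obtain ⟨z, hz, hyz⟩ := h y
    exact hyz.trans (le_csSup (hf.mono (image_subset_range f s)) ⟨z, hz, rfl⟩)

theorem sInf_image_eq_iInf_of_forall_exists_le {α : Type*} [Nonempty α] {f : α → ℝ}
    {s : Set α} (hf : BddBelow (range f)) (h : ∀ y, ∃ z ∈ s, f z ≤ f y) :
    sInf (f '' s) = ⨅ y, f y := by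
  obtain ⟨z, hz, -⟩ := h (Classical.arbitrary α)
  refine le_antisymm (le_ciInf fun y => ?_) (le_csInf ⟨_, z, hz, rfl⟩ ?_)
  · obtain ⟨z, hz, hzy⟩ := h y
    exact (csInf_le (hf.mono (image_subset_range f s)) ⟨z, hz, rfl⟩).trans hzy
  · rintro _ ⟨y, -, rfl⟩
    exact ciInf_le hf y

section Moreau

variable {n : ℕ} {lam : ℝ} {Ω : Set (EuclideanSpace ℝ (Fin n))}
  {g : EuclideanSpace ℝ (Fin n) → ℝ} {x : EuclideanSpace ℝ (Fin n)}

theorem bddAbove_range_sub_mul_norm_sq (hg : BddAbove (range g)) (hlam : 0 ≤ lam) :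
    BddAbove (range fun y => g y - lam * ‖y - x‖ ^ 2) := by
  obtain ⟨c, hc⟩ := hg
  refine ⟨c, ?_⟩
  rintro _ ⟨y, rfl⟩
  have hy : g y ≤ c := hc ⟨y, rfl⟩
  nlinarith [sq_nonneg ‖y - x‖]

theorem le_moreauUpper (hg : BddAbove (range g)) (hlam : 0 ≤ lam) :
    g x ≤ moreauUpper lam g x := by
  calc g x = g x - lam * ‖x - x‖ ^ 2 := by simp
    _ ≤ moreauUpper lam g x := le_ciSup (bddAbove_range_sub_mul_norm_sq hg hlam) x

theorem moreauLowerLoc_congr {h : EuclideanSpace ℝ (Fin n) → ℝ} (hgh : EqOn g h (closure Ω)) :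
    moreauLowerLoc lam Ω g x = moreauLowerLoc lam Ω h x := by
  unfold moreauLowerLoc
  rw [image_congr fun y hy => by rw [hgh hy]]

theorem moreauUpperLoc_eq_moreauUpper (hg_nonneg : 0 ≤ g) (hg : BddAbove (range g))
    (hsupp : Function.support g ⊆ closure Ω) (hlam : 0 ≤ lam) (hx : x ∈ closure Ω) :
    moreauUpperLoc lam Ω g x = moreauUpper lam g x := by
  refine sSup_image_eq_iSup_of_forall_exists_le (bddAbove_range_sub_mul_norm_sq hg hlam)
    fun y => ?_
  by_cases hy : y ∈ closure Ω
  · exact ⟨y, hy, le_rfl⟩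
  · refine ⟨x, hx, ?_⟩
    rw [Function.notMem_support.1 fun h => hy (hsupp h)]
    have hgx : 0 ≤ g x := hg_nonneg x
    simp only [sub_self, norm_zero]
    nlinarith [sq_nonneg ‖y - x‖]

theorem moreauLowerLoc_eq_moreauLower (hg_nonneg : 0 ≤ g) (hg_fr : ∀ z ∈ frontier Ω, g z ≤ 0)
    (hlam : 0 ≤ lam) (hx : x ∈ closure Ω) :
    moreauLowerLoc lam Ω g x = moreauLower lam g x := by
  refine sInf_image_eq_iInf_of_forall_exists_le
    ⟨0, by rintro _ ⟨y, rfl⟩; exact add_nonneg (hg_nonneg y) (by positivity)⟩ fun y => ?_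
  by_cases hy : y ∈ closure Ω
  · exact ⟨y, hy, le_rfl⟩
  · obtain ⟨z, hz, hxz⟩ := exists_mem_frontier_dist_le hx fun h => hy (subset_closure h)
    refine ⟨z, frontier_subset_closure hz, ?_⟩
    rw [dist_comm, dist_eq_norm, dist_comm, dist_eq_norm] at hxz
    have hgy : 0 ≤ g y := hg_nonneg y
    gcongr ?_ + lam * ?_ ^ 2
    linarith [hg_fr z hz]

end Moreau

section CharFun

variable {n : ℕ} {K : Set (EuclideanSpace ℝ (Fin n))}

theorem charFun_nonneg : 0 ≤ charFun K := fun y => by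
  unfold charFun; split_ifs <;> norm_num

theorem bddAbove_range_charFun : BddAbove (range (charFun K)) :=
  ⟨1, by rintro _ ⟨y, rfl⟩; unfold charFun; split_ifs <;> norm_num⟩

theorem support_charFun_subset : Function.support (charFun K) ⊆ K := fun y hy => by
  by_contra hyK
  exact hy (if_neg hyK)

theorem moreauUpper_charFun_nonpos {lam : ℝ} {z : EuclideanSpace ℝ (Fin n)} (hlam : 0 ≤ lam)
    (hK : ∀ w ∈ K, 1 < lam * ‖w - z‖ ^ 2) : moreauUpper lam (charFun K) z ≤ 0 := by
  refine ciSup_le fun w => ?_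
  unfold charFun
  split_ifs with hw
  · linarith [hK w hw]
  · nlinarith [sq_nonneg ‖w - z‖]

end CharFun

theorem charFun_local_eq_global_general {n : ℕ} (Ω K : Set (EuclideanSpace ℝ (Fin n)))
    (hKΩ : K ⊆ Ω)
    (lam : ℝ) (hlam : 0 < lam)
    (hdist : (sInf {d : ℝ | ∃ y ∈ K, ∃ z ∈ frontier Ω, d = dist y z}) ^ 2 > 1 / lam) :
    ∀ x ∈ closure Ω,
      moreauUpperLoc lam Ω (charFun K) x = moreauUpper lam (charFun K) x ∧
      moreauLowerLoc lam Ω (moreauUpperLoc lam Ω (charFun K)) x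
          = moreauLower lam (moreauUpper lam (charFun K)) x := by
  have hupper : ∀ p ∈ closure Ω,
      moreauUpperLoc lam Ω (charFun K) p = moreauUpper lam (charFun K) p := fun p =>
    moreauUpperLoc_eq_moreauUpper charFun_nonneg bddAbove_range_charFun
      (support_charFun_subset.trans (hKΩ.trans subset_closure)) hlam.le
  have hfrontier : ∀ z ∈ frontier Ω, moreauUpper lam (charFun K) z ≤ 0 := fun z hz =>
    moreauUpper_charFun_nonpos hlam.le fun w hw => by
      rw [← dist_eq_norm, ← div_lt_iff₀' hlam]
      exact lt_dist_sq_of_lt_sInf_dist_sq hdist hw hz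
  have hnonneg : 0 ≤ moreauUpper lam (charFun K) := fun y =>
    (charFun_nonneg y).trans (le_moreauUpper bddAbove_range_charFun hlam.le)
  intro x hx
  refine ⟨hupper x hx, ?_⟩
  rw [moreauLowerLoc_congr hupper]
  exact moreauLowerLoc_eq_moreauLower hnonneg hfrontier hlam.le hx

/-- For `Ω ⊂ ℝⁿ` open, `K ⊂ Ω` non-empty compact and `dist²(K,∂Ω) > 1/λ`,
the local and global (mixed) Moreau envelopes of `χ_K` agree on `closure Ω`;
consequently `C^u_{λ,Ω}(χ_K^Ω)(x) = C^u_λ(χ_K)(x)` there. -/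
theorem charFun_local_eq_global {n : ℕ} (Ω K : Set (EuclideanSpace ℝ (Fin n)))
    (hΩo : IsOpen Ω) (hK : IsCompact K) (hKne : K.Nonempty) (hKΩ : K ⊆ Ω)
    (lam : ℝ) (hlam : 0 < lam)
    (hdist : (sInf {d : ℝ | ∃ y ∈ K, ∃ z ∈ frontier Ω, d = dist y z}) ^ 2 > 1 / lam) :
    ∀ x ∈ closure Ω,
      moreauUpperLoc lam Ω (charFun K) x = moreauUpper lam (charFun K) x ∧
      moreauLowerLoc lam Ω (moreauUpperLoc lam Ω (charFun K)) x
          = moreauLower lam (moreauUpper lam (charFun K)) x :=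
  charFun_local_eq_global_general Ω K hKΩ lam hlam hdist
end
end

section
/- Let Ω ⊂ ℝⁿ be a bounded open set, K ⊂ Ω compact, f : K → ℝ bounded, M > 0 and λ > 0. Then for every x ∈ closure(Ω): M_{λ,Ω}(f^M_{Ω̄,K})(x) = M_λ(f^M_{ℝⁿ,K})(x), M^λ_Ω(f^{−M}_{Ω̄,K})(x) = M^λ(f^{−M}_{ℝⁿ,K})(x), M^λ_Ω(M_{λ,Ω}(f^M_{Ω̄,K}))(x) = M^λ(M_λ(f^M_{ℝⁿ,K}))(x), and M_{λ,Ω}(M^λ_Ω(f^{−M}_{Ω̄,K}))(x) = M_λ(M^λ(f^{−M}_{ℝⁿ,K}))(x). -/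
noncomputable section
attribute [local instance] Classical.propDecidable

/-- The function `f^M_{·,K}`: equal to `f` on `K`, to `M` on `Ω \ K`, and to
`inf_K f` off `Ω` (in particular on `∂Ω`); this realizes both `f^M_{Ω̄,K}` on
`closure Ω` and `f^M_{ℝⁿ,K}` on `ℝⁿ`. -/
def extM {n : ℕ} (Ω K : Set (EuclideanSpace ℝ (Fin n)))
    (f : EuclideanSpace ℝ (Fin n) → ℝ) (M : ℝ) (x : EuclideanSpace ℝ (Fin n)) : ℝ :=
  if x ∈ K then f x else if x ∈ Ω then M else sInf (f '' K)

/-- The function `f^{−M}_{·,K}`: equal to `f` on `K`, to `−M` on `Ω \ K`, and to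
`sup_K f` off `Ω`; this realizes both `f^{−M}_{Ω̄,K}` on `closure Ω` and
`f^{−M}_{ℝⁿ,K}` on `ℝⁿ`. -/
def extNegM {n : ℕ} (Ω K : Set (EuclideanSpace ℝ (Fin n)))
    (f : EuclideanSpace ℝ (Fin n) → ℝ) (M : ℝ) (x : EuclideanSpace ℝ (Fin n)) : ℝ :=
  if x ∈ K then f x else if x ∈ Ω then -M else sSup (f '' K)

/- ---------------- Auxiliary lemmas ---------------- -/

section Aux

variable {n : ℕ}

private lemma real_sInf_neg (S : Set ℝ) : sInf (-S) = -sSup S := by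
  rw [Real.sInf_def, neg_neg]

private lemma real_sSup_neg (S : Set ℝ) : sSup (-S) = -sInf S := by
  rw [Real.sInf_def, neg_neg]

/-- Exit point of the segment from `x ∈ closure Ω` to `y ∉ closure Ω`. -/
private lemma exists_exit {Ω : Set (EuclideanSpace ℝ (Fin n))} (hΩo : IsOpen Ω) {x y : EuclideanSpace ℝ (Fin n)}
    (hx : x ∈ closure Ω) (hy : y ∉ closure Ω) :
    ∃ p, p ∈ closure Ω ∧ p ∉ Ω ∧ ‖p - x‖ ≤ ‖y - x‖ ∧ ‖y - p‖ ≤ ‖y - x‖ := by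
  set γ : ℝ → EuclideanSpace ℝ (Fin n) := fun t => x + t • (y - x) with hγ
  have hcont : Continuous γ := by
    exact continuous_const.add (continuous_id.smul continuous_const)
  have hγ0 : γ 0 = x := by simp [hγ]
  have hγ1 : γ 1 = y := by
    show x + (1:ℝ) • (y - x) = y
    rw [one_smul]; abel
  set S : Set ℝ := Set.Icc (0:ℝ) 1 ∩ γ ⁻¹' (closure Ω) with hS
  have hS0 : (0:ℝ) ∈ S := ⟨⟨le_refl 0, zero_le_one⟩, by simp [Set.mem_preimage, hγ0, hx]⟩
  have hSne : S.Nonempty := ⟨0, hS0⟩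
  have hSb : BddAbove S := ⟨1, fun t ht => ht.1.2⟩
  have hScl : IsClosed S := isClosed_Icc.inter (isClosed_closure.preimage hcont)
  set t₀ := sSup S with ht₀
  have ht₀S : t₀ ∈ S := hScl.csSup_mem hSne hSb
  obtain ⟨⟨ht₀0, ht₀1⟩, hpc⟩ := ht₀S
  have hpΩ : γ t₀ ∉ Ω := by
    intro hmem
    have ht₀ne1 : t₀ ≠ 1 := by
      intro h
      apply hy
      rw [← hγ1, ← h]
      exact hpc
    have ht₀lt1 : t₀ < 1 := lt_of_le_of_ne ht₀1 ht₀ne1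
    obtain ⟨δ, hδpos, hball⟩ := Metric.isOpen_iff.mp (hΩo.preimage hcont) t₀ hmem
    set t₁ := min (t₀ + δ/2) 1 with ht₁
    have ht₀t₁ : t₀ < t₁ := lt_min (by linarith) ht₀lt1
    have ht₁S : t₁ ∈ S := by
      refine ⟨⟨by linarith, min_le_right _ _⟩, ?_⟩
      have : t₁ ∈ Metric.ball t₀ δ := by
        rw [Metric.mem_ball, Real.dist_eq, abs_of_nonneg (by linarith)]
        have : t₁ ≤ t₀ + δ/2 := min_le_left _ _
        linarith
      exact subset_closure (hball this)
    have := le_csSup hSb ht₁S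
    linarith
  refine ⟨γ t₀, hpc, hpΩ, ?_, ?_⟩
  · have h1 : γ t₀ - x = t₀ • (y - x) := by
      show x + t₀ • (y - x) - x = t₀ • (y - x)
      abel
    rw [h1, norm_smul, Real.norm_eq_abs, abs_of_nonneg ht₀0]
    nlinarith [norm_nonneg (y - x)]
  · have h1 : y - γ t₀ = (1 - t₀) • (y - x) := by
      show y - (x + t₀ • (y - x)) = (1 - t₀) • (y - x)
      rw [sub_smul, one_smul]
      abel
    rw [h1, norm_smul, Real.norm_eq_abs, abs_of_nonneg (by linarith)]
    nlinarith [norm_nonneg (y - x)]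

variable {Ω K : Set (EuclideanSpace ℝ (Fin n))} {f : EuclideanSpace ℝ (Fin n) → ℝ} {M lam C : ℝ}

/-- Part 1: the local and global lower envelopes of `extM` agree on `closure Ω`. -/
private lemma part1 (hΩo : IsOpen Ω) (hK : IsCompact K) (hKΩ : K ⊆ Ω)
    (hfC : ∀ z ∈ K, |f z| ≤ C) (hM : 0 < M) (hlam : 0 < lam)
    {x : EuclideanSpace ℝ (Fin n)} (hx : x ∈ closure Ω) :
    moreauLowerLoc lam Ω (extM Ω K f M) x = moreauLower lam (extM Ω K f M) x := by
  unfold moreauLowerLoc moreauLower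
  set g := extM Ω K f M with hg
  set cm := sInf (f '' K) with hcm
  have hbK : BddBelow (f '' K) := by
    refine ⟨-C, ?_⟩
    rintro _ ⟨k, hk, rfl⟩
    have := abs_le.mp (hfC k hk)
    linarith [this.1]
  have hglb : ∀ z, min cm M ≤ g z := by
    intro z
    by_cases hzK : z ∈ K
    · rw [hg]; simp only [extM, if_pos hzK]
      exact le_trans (min_le_left _ _) (by rw [hcm]; exact csInf_le hbK ⟨z, hzK, rfl⟩)
    · by_cases hzΩ : z ∈ Ω
      · rw [hg]; simp only [extM, if_neg hzK, if_pos hzΩ]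
        exact min_le_right _ _
      · rw [hg]; simp only [extM, if_neg hzK, if_neg hzΩ]
        rw [← hcm]; exact min_le_left _ _
  have hφlb : ∀ y z : EuclideanSpace ℝ (Fin n), min cm M ≤ g z + lam * ‖z - y‖ ^ 2 := fun y z =>
    le_trans (hglb z) (le_add_of_nonneg_right (mul_nonneg hlam.le (sq_nonneg _)))
  have hbr : ∀ y : EuclideanSpace ℝ (Fin n), BddBelow (Set.range fun z => g z + lam * ‖z - y‖ ^ 2) := by
    intro y
    refine ⟨min cm M, ?_⟩
    rintro _ ⟨z, rfl⟩
    exact hφlb y z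
  have hbi : BddBelow ((fun z => g z + lam * ‖z - x‖ ^ 2) '' closure Ω) :=
    (hbr x).mono (Set.image_subset_range _ _)
  apply le_antisymm
  · refine le_ciInf fun y => ?_
    by_cases hy : y ∈ closure Ω
    · exact csInf_le hbi ⟨y, hy, rfl⟩
    · obtain ⟨p, hpc, hpΩ, hpx, -⟩ := exists_exit hΩo hx hy
      have hpK : p ∉ K := fun h => hpΩ (hKΩ h)
      have hyΩ : y ∉ Ω := fun h => hy (subset_closure h)
      have hyK : y ∉ K := fun h => hyΩ (hKΩ h)
      have hgp : g p = cm := by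
        rw [hg]; simp only [extM, if_neg hpK, if_neg hpΩ]; exact hcm.symm
      have hgy : g y = cm := by
        rw [hg]; simp only [extM, if_neg hyK, if_neg hyΩ]; exact hcm.symm
      have h1 : g p + lam * ‖p - x‖ ^ 2 ≤ g y + lam * ‖y - x‖ ^ 2 := by
        rw [hgp, hgy]
        have hsq : ‖p - x‖ ^ 2 ≤ ‖y - x‖ ^ 2 := by
          nlinarith [norm_nonneg (p - x), norm_nonneg (y - x), hpx]
        nlinarith [mul_le_mul_of_nonneg_left hsq hlam.le]
      exact le_trans (csInf_le hbi ⟨p, hpc, rfl⟩) h1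
  · refine le_csInf ⟨_, ⟨x, hx, rfl⟩⟩ ?_
    rintro b ⟨y, -, rfl⟩
    exact ciInf_le (hbr x) y

/-- Part 3: local and global upper envelopes of the lower envelopes agree on `closure Ω`. -/
private lemma part3 (hΩo : IsOpen Ω) (hK : IsCompact K) (hKΩ : K ⊆ Ω)
    (hfC : ∀ z ∈ K, |f z| ≤ C) (hM : 0 < M) (hlam : 0 < lam)
    {x : EuclideanSpace ℝ (Fin n)} (hx : x ∈ closure Ω) :
    moreauUpperLoc lam Ω (moreauLowerLoc lam Ω (extM Ω K f M)) x
      = moreauUpper lam (moreauLower lam (extM Ω K f M)) x := by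
  have hA : ∀ y ∈ closure Ω,
      moreauLowerLoc lam Ω (extM Ω K f M) y = moreauLower lam (extM Ω K f M) y :=
    fun y hy => part1 hΩo hK hKΩ hfC hM hlam hy
  unfold moreauUpperLoc moreauUpper
  set g := extM Ω K f M with hg
  set v := moreauLower lam g with hv
  set cm := sInf (f '' K) with hcm
  -- basic bounds on g
  have hbK : BddBelow (f '' K) := by
    refine ⟨-C, ?_⟩
    rintro _ ⟨k, hk, rfl⟩
    have := abs_le.mp (hfC k hk)
    linarith [this.1]
  have hglb : ∀ z, min cm M ≤ g z := by
    intro z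
    by_cases hzK : z ∈ K
    · rw [hg]; simp only [extM, if_pos hzK]
      exact le_trans (min_le_left _ _) (by rw [hcm]; exact csInf_le hbK ⟨z, hzK, rfl⟩)
    · by_cases hzΩ : z ∈ Ω
      · rw [hg]; simp only [extM, if_neg hzK, if_pos hzΩ]
        exact min_le_right _ _
      · rw [hg]; simp only [extM, if_neg hzK, if_neg hzΩ]
        rw [← hcm]; exact min_le_left _ _
  set U := max C (max M |cm|) with hU
  have hgub : ∀ z, g z ≤ U := by
    intro z
    by_cases hzK : z ∈ K
    · rw [hg]; simp only [extM, if_pos hzK]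
      exact le_trans (le_trans (le_abs_self _) (hfC z hzK)) (le_max_left _ _)
    · by_cases hzΩ : z ∈ Ω
      · rw [hg]; simp only [extM, if_neg hzK, if_pos hzΩ]
        exact le_trans (le_max_left _ _) (le_max_right _ _)
      · rw [hg]; simp only [extM, if_neg hzK, if_neg hzΩ]
        rw [← hcm]
        exact le_trans (le_abs_self _) (le_trans (le_max_right _ _) (le_max_right _ _))
  have hφlb : ∀ y z : EuclideanSpace ℝ (Fin n), min cm M ≤ g z + lam * ‖z - y‖ ^ 2 := fun y z =>
    le_trans (hglb z) (le_add_of_nonneg_right (mul_nonneg hlam.le (sq_nonneg _)))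
  have hbr : ∀ y : EuclideanSpace ℝ (Fin n), BddBelow (Set.range fun z => g z + lam * ‖z - y‖ ^ 2) := by
    intro y
    refine ⟨min cm M, ?_⟩
    rintro _ ⟨z, rfl⟩
    exact hφlb y z
  -- bounds on v
  have hvub : ∀ t, v t ≤ U := by
    intro t
    have h1 : v t ≤ g t + lam * ‖t - t‖ ^ 2 := ciInf_le (hbr t) t
    have h2 : g t + lam * ‖t - t‖ ^ 2 = g t := by simp
    rw [h2] at h1
    exact le_trans h1 (hgub t)
  have hvlb : ∀ t, min cm M ≤ v t := fun t => le_ciInf fun z => hφlb t z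
  set ψ : EuclideanSpace ℝ (Fin n) → ℝ := fun t => v t - lam * ‖t - x‖ ^ 2 with hψ
  have hψub : ∀ t, ψ t ≤ U := fun t =>
    le_trans (sub_le_self _ (mul_nonneg hlam.le (sq_nonneg _))) (hvub t)
  have hbrψ : BddAbove (Set.range ψ) := by
    refine ⟨U, ?_⟩
    rintro _ ⟨t, rfl⟩
    exact hψub t
  have hbiψ : BddAbove (ψ '' closure Ω) := hbrψ.mono (Set.image_subset_range _ _)
  have himg : (fun y => moreauLowerLoc lam Ω g y - lam * ‖y - x‖ ^ 2) '' closure Ω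
      = ψ '' closure Ω := by
    apply Set.image_congr
    intro t ht
    rw [hψ]
    rw [hA t ht]
  rw [himg]
  apply le_antisymm
  · refine csSup_le ⟨ψ x, ⟨x, hx, rfl⟩⟩ ?_
    rintro b ⟨t, -, rfl⟩
    exact le_ciSup hbrψ t
  · refine ciSup_le fun t => ?_
    by_cases ht : t ∈ closure Ω
    · exact le_csSup hbiψ ⟨t, ht, rfl⟩
    · have hψx : ψ x = v x := by simp [hψ]
      have hkey : ψ t ≤ ψ x := by
        rw [hψx]
        show v t - lam * ‖t - x‖ ^ 2 ≤ v x
        have htΩ : t ∉ Ω := fun h => ht (subset_closure h)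
        have htK : t ∉ K := fun h => htΩ (hKΩ h)
        by_cases hcM : cm ≤ M
        · -- v t ≤ cm ≤ v x
          have hgt : g t = cm := by
            rw [hg]; simp only [extM, if_neg htK, if_neg htΩ]; exact hcm.symm
          have h1 : v t ≤ g t + lam * ‖t - t‖ ^ 2 := ciInf_le (hbr t) t
          have h2 : g t + lam * ‖t - t‖ ^ 2 = cm := by simp [hgt]
          rw [h2] at h1
          have h3 : cm ≤ v x := by
            have := hvlb x
            rwa [min_eq_left hcM] at this
          nlinarith [mul_nonneg hlam.le (sq_nonneg ‖t - x‖)]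
        · push_neg at hcM
          have h2 : M ≤ v x := by
            have := hvlb x
            rwa [min_eq_right hcM.le] at this
          have hmain : ∀ ε > 0, v t ≤ M + lam * ‖t - x‖ ^ 2 + ε := by
            intro ε hε
            obtain ⟨p, hpc, hpΩ, -, hpt⟩ := exists_exit hΩo hx ht
            have hpK : p ∉ K := fun h => hpΩ (hKΩ h)
            obtain ⟨δ₀, hδ₀, hδ₀K⟩ : ∃ δ₀ > 0, ∀ w, dist p w < δ₀ → w ∉ K := by
              obtain ⟨δ₀, hδ₀, hsub⟩ :=
                Metric.isOpen_iff.mp hK.isClosed.isOpen_compl p hpK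
              exact ⟨δ₀, hδ₀, fun w hw =>
                hsub (Metric.mem_ball.mpr (by rwa [dist_comm] at hw))⟩
            have hcnn : (0:ℝ) ≤ ‖t - x‖ := norm_nonneg _
            have hden : (0:ℝ) < lam * (2 * ‖t - x‖ + 1) := mul_pos hlam (by linarith)
            set δ := min (min δ₀ 1) (ε / (lam * (2 * ‖t - x‖ + 1))) with hδdef
            have hδpos : 0 < δ := lt_min (lt_min hδ₀ one_pos) (div_pos hε hden)
            obtain ⟨w, hwΩ, hwd⟩ := Metric.mem_closure_iff.mp hpc δ hδpos
            have hwK : w ∉ K :=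
              hδ₀K w (lt_of_lt_of_le hwd (le_trans (min_le_left _ _) (min_le_left _ _)))
            have hgw : g w = M := by
              rw [hg]; simp only [extM, if_neg hwK, if_pos hwΩ]
            have h3 : v t ≤ M + lam * ‖w - t‖ ^ 2 := by
              have h := ciInf_le (hbr t) w
              rwa [hgw] at h
            have h4 : ‖w - t‖ ≤ ‖t - x‖ + δ := by
              have e1 : ‖w - t‖ = dist w t := (dist_eq_norm _ _).symm
              have e2 : dist w t ≤ dist w p + dist p t := dist_triangle _ _ _
              have e3 : dist w p < δ := by rwa [dist_comm] at hwd
              have e4 : dist p t ≤ ‖t - x‖ := by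
                rw [dist_eq_norm, ← norm_neg]
                simpa [neg_sub] using hpt
              linarith
            have hδ1 : δ ≤ 1 := le_trans (min_le_left _ _) (min_le_right _ _)
            have h7 : lam * (2 * ‖t - x‖ + 1) * δ ≤ ε := by
              have hle : δ ≤ ε / (lam * (2 * ‖t - x‖ + 1)) := min_le_right _ _
              calc lam * (2 * ‖t - x‖ + 1) * δ
                  ≤ lam * (2 * ‖t - x‖ + 1) * (ε / (lam * (2 * ‖t - x‖ + 1))) :=
                    mul_le_mul_of_nonneg_left hle hden.le
                _ = ε := by field_simp
            have h8 : ‖w - t‖ ^ 2 ≤ (‖t - x‖ + δ) ^ 2 := by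
              nlinarith [norm_nonneg (w - t)]
            nlinarith [h3, mul_le_mul_of_nonneg_left h8 hlam.le, h7, hδpos, hδ1,
              mul_pos hlam hδpos]
          have h9 : v t ≤ M + lam * ‖t - x‖ ^ 2 := by
            by_contra hcon
            push_neg at hcon
            have := hmain ((v t - (M + lam * ‖t - x‖ ^ 2)) / 2) (by linarith)
            linarith
          linarith
      exact le_trans hkey (le_csSup hbiψ ⟨x, hx, rfl⟩)

/- duality lemmas -/

private lemma neg_lower (lam : ℝ) (G : EuclideanSpace ℝ (Fin n) → ℝ) (x : EuclideanSpace ℝ (Fin n)) :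
    moreauLower lam (fun t => -G t) x = -moreauUpper lam G x := by
  unfold moreauLower moreauUpper
  have himg : (Set.range fun t => -G t + lam * ‖t - x‖ ^ 2)
      = -(Set.range fun t => G t - lam * ‖t - x‖ ^ 2) := by
    ext a
    simp only [Set.mem_neg, Set.mem_range]
    constructor
    · rintro ⟨t, ht⟩; exact ⟨t, by linarith⟩
    · rintro ⟨t, ht⟩; exact ⟨t, by linarith⟩
  show sInf _ = -sSup _
  rw [himg, real_sInf_neg]

private lemma neg_upper (lam : ℝ) (G : EuclideanSpace ℝ (Fin n) → ℝ) (x : EuclideanSpace ℝ (Fin n)) :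
    moreauUpper lam (fun t => -G t) x = -moreauLower lam G x := by
  unfold moreauLower moreauUpper
  have himg : (Set.range fun t => -G t - lam * ‖t - x‖ ^ 2)
      = -(Set.range fun t => G t + lam * ‖t - x‖ ^ 2) := by
    ext a
    simp only [Set.mem_neg, Set.mem_range]
    constructor
    · rintro ⟨t, ht⟩; exact ⟨t, by linarith⟩
    · rintro ⟨t, ht⟩; exact ⟨t, by linarith⟩
  show sSup _ = -sInf _
  rw [himg, real_sSup_neg]

private lemma neg_lowerLoc (lam : ℝ) (Ω : Set (EuclideanSpace ℝ (Fin n))) (G : EuclideanSpace ℝ (Fin n) → ℝ) (x : EuclideanSpace ℝ (Fin n)) :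
    moreauLowerLoc lam Ω (fun t => -G t) x = -moreauUpperLoc lam Ω G x := by
  unfold moreauLowerLoc moreauUpperLoc
  have himg : ((fun t => -G t + lam * ‖t - x‖ ^ 2) '' closure Ω)
      = -((fun t => G t - lam * ‖t - x‖ ^ 2) '' closure Ω) := by
    ext a
    simp only [Set.mem_neg, Set.mem_image]
    constructor
    · rintro ⟨t, ht, h⟩; exact ⟨t, ht, by linarith⟩
    · rintro ⟨t, ht, h⟩; exact ⟨t, ht, by linarith⟩
  rw [himg, real_sInf_neg]

private lemma neg_upperLoc (lam : ℝ) (Ω : Set (EuclideanSpace ℝ (Fin n))) (G : EuclideanSpace ℝ (Fin n) → ℝ) (x : EuclideanSpace ℝ (Fin n)) :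
    moreauUpperLoc lam Ω (fun t => -G t) x = -moreauLowerLoc lam Ω G x := by
  unfold moreauLowerLoc moreauUpperLoc
  have himg : ((fun t => -G t - lam * ‖t - x‖ ^ 2) '' closure Ω)
      = -((fun t => G t + lam * ‖t - x‖ ^ 2) '' closure Ω) := by
    ext a
    simp only [Set.mem_neg, Set.mem_image]
    constructor
    · rintro ⟨t, ht, h⟩; exact ⟨t, ht, by linarith⟩
    · rintro ⟨t, ht, h⟩; exact ⟨t, ht, by linarith⟩
  rw [himg, real_sSup_neg]

private lemma extNegM_eq (Ω K : Set (EuclideanSpace ℝ (Fin n))) (f : EuclideanSpace ℝ (Fin n) → ℝ) (M : ℝ) :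
    extNegM Ω K f M = fun t => -(extM Ω K (fun s => -f s) M t) := by
  funext t
  unfold extNegM extM
  have himg : ((fun s => -f s) '' K) = -(f '' K) := by
    ext a
    simp only [Set.mem_neg, Set.mem_image]
    constructor
    · rintro ⟨k, hk, h⟩; exact ⟨k, hk, by linarith⟩
    · rintro ⟨k, hk, h⟩; exact ⟨k, hk, by linarith⟩
  rw [himg, real_sInf_neg]
  split_ifs <;> ring

end Aux

/-- For `Ω ⊂ ℝⁿ` bounded open, `K ⊂ Ω` compact, `f : K → ℝ` bounded, `M > 0`, `λ > 0`,
the local and global (mixed) Moreau envelopes of `f^M` and `f^{−M}` agree on `closure Ω`. -/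
theorem extM_local_eq_global {n : ℕ} (Ω K : Set (EuclideanSpace ℝ (Fin n)))
    (hΩo : IsOpen Ω) (hΩb : Bornology.IsBounded Ω) (hK : IsCompact K) (hKΩ : K ⊆ Ω)
    (f : EuclideanSpace ℝ (Fin n) → ℝ) (hf : ∃ C : ℝ, ∀ x ∈ K, |f x| ≤ C)
    (M : ℝ) (hM : 0 < M) (lam : ℝ) (hlam : 0 < lam) :
    ∀ x ∈ closure Ω,
      moreauLowerLoc lam Ω (extM Ω K f M) x = moreauLower lam (extM Ω K f M) x ∧
      moreauUpperLoc lam Ω (extNegM Ω K f M) x = moreauUpper lam (extNegM Ω K f M) x ∧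
      moreauUpperLoc lam Ω (moreauLowerLoc lam Ω (extM Ω K f M)) x
          = moreauUpper lam (moreauLower lam (extM Ω K f M)) x ∧
      moreauLowerLoc lam Ω (moreauUpperLoc lam Ω (extNegM Ω K f M)) x
          = moreauLower lam (moreauUpper lam (extNegM Ω K f M)) x := by
  obtain ⟨C, hfC⟩ := hf
  intro x hx
  have hfC' : ∀ z ∈ K, |(fun s => -f s) z| ≤ C := fun z hz => by
    simpa [abs_neg] using hfC z hz
  have e1 : extNegM Ω K f M = fun t => -(extM Ω K (fun s => -f s) M t) :=
    extNegM_eq Ω K f M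
  refine ⟨part1 hΩo hK hKΩ hfC hM hlam hx, ?_, part3 hΩo hK hKΩ hfC hM hlam hx, ?_⟩
  · -- part 2
    rw [e1, neg_upperLoc, neg_upper, part1 hΩo hK hKΩ hfC' hM hlam hx]
  · -- part 4
    rw [e1]
    have i1 : moreauUpperLoc lam Ω (fun t => -(extM Ω K (fun s => -f s) M t))
        = fun y => -(moreauLowerLoc lam Ω (extM Ω K (fun s => -f s) M) y) :=
      funext fun y => neg_upperLoc lam Ω _ y
    have i2 : moreauUpper lam (fun t => -(extM Ω K (fun s => -f s) M t))
        = fun y => -(moreauLower lam (extM Ω K (fun s => -f s) M) y) :=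
      funext fun y => neg_upper lam _ y
    rw [i1, i2, neg_lowerLoc, neg_lower, part3 hΩo hK hKΩ hfC' hM hlam hx]
end
end
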